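/- arXiv:2012.03859 — 4 statements merged into one kernel-verified Lean document; each statement's English description precedes it below -/
import Mathlib

section
/- For d = 2, the projection Π on the span of bistochastic maps preserves complete positivity: if |Ψ⟩ ∈ ℂ²⊗ℂ² is a unit vector with reduced states ρ₁ = Tr₂|Ψ⟩⟨Ψ| and ρ₂ = Tr₁|Ψ⟩⟨Ψ|, then the operator A = |Ψ⟩⟨Ψ| + (I⊗I)/2 − ρ₁⊗(I/2) − (I/2)⊗ρ₂ is positive semidefinite; indeed A = ½|Ψ⟩⟨Ψ| + ½|Ψ'⟩⟨Ψ'| where |Ψ'⟩ = √(1−p)|α₁⟩|β₁⟩ + √p|α₂⟩|β₂⟩ for the Schmidt decomposition |Ψ⟩ = √p|α₁⟩|β₁⟩ + √(1−p)|α₂⟩|β₂⟩. -/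
/-!
Write `P i j = |αᵢ⟩⟨αⱼ|` and `Q i j = |βᵢ⟩⟨βⱼ|`. Orthonormality of the Schmidt bases gives
`I = P 0 0 + P 1 1`, `I = Q 0 0 + Q 1 1`, `ρ₁ = p P 0 0 + (1 - p) P 1 1` and
`ρ₂ = p Q 0 0 + (1 - p) Q 1 1`, so `(I ⊗ I - ρ₁ ⊗ I - I ⊗ ρ₂) / 2` has coefficient
`(1 - pᵢ - pⱼ) / 2` on `P i i ⊗ Q j j`, i.e. equals `(1 - 2p) (P 0 0 ⊗ Q 0 0 - P 1 1 ⊗ Q 1 1) / 2`.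
Swapping `p` and `1 - p` in `|Ψ⟩` leaves the cross terms of `|Ψ⟩⟨Ψ|` unchanged, so this is also
`(|Ψ'⟩⟨Ψ'| - |Ψ⟩⟨Ψ|) / 2`. Hence `A = (|Ψ⟩⟨Ψ| + |Ψ'⟩⟨Ψ'|) / 2`, a sum of positive matrices.
-/

open Matrix Kronecker
open scoped ComplexOrder

theorem sum_vecMulVec_self_star_eq_one {R n : Type*} [CommRing R] [StarRing R] [Fintype n]
    [DecidableEq n] {α : n → n → R}
    (hα : ∀ i j, ∑ k, star (α i k) * α j k = if i = j then 1 else 0) :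
    ∑ i, vecMulVec (α i) (star (α i)) = 1 := by
  have hrows : of α * (of α)ᴴ = 1 := by
    ext i j
    simpa only [mul_apply, conjTranspose_apply, of_apply, one_apply, mul_comm, eq_comm]
      using hα j i
  -- a square matrix with orthonormal rows also has orthonormal columns
  have hcols := congrArg transpose (mul_eq_one_comm.mp hrows)
  rw [transpose_one] at hcols
  rw [← hcols]
  ext a c
  simp only [Matrix.sum_apply, vecMulVec_apply, Pi.star_apply, transpose_apply, mul_apply,
    conjTranspose_apply, of_apply, mul_comm]

section PartialTrace

variable {R m n : Type*} [AddCommMonoid R]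

def partialTraceRight [Fintype n] (M : Matrix (m × n) (m × n) R) : Matrix m m R :=
  of fun a b => ∑ k, M (a, k) (b, k)

def partialTraceLeft [Fintype m] (M : Matrix (m × n) (m × n) R) : Matrix n n R :=
  of fun a b => ∑ k, M (k, a) (k, b)

end PartialTrace

section Schmidt

variable {ι m n : Type*} [Fintype ι]

def schmidtVec (c : ι → ℝ) (α : ι → m → ℂ) (β : ι → n → ℂ) : m × n → ℂ :=
  fun q => ∑ i, (c i : ℂ) * α i q.1 * β i q.2

theorem schmidtVec_swap (c : ι → ℝ) (α : ι → m → ℂ) (β : ι → n → ℂ) (a : m) (b : n) :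
    schmidtVec c α β (a, b) = schmidtVec c β α (b, a) := by
  simp only [schmidtVec, mul_right_comm]

theorem vecMulVec_schmidtVec (c : ι → ℝ) (α : ι → m → ℂ) (β : ι → n → ℂ) :
    vecMulVec (schmidtVec c α β) (star (schmidtVec c α β))
      = ∑ i, ∑ j, ((c i * c j : ℝ) : ℂ)
          • (vecMulVec (α i) (star (α j)) ⊗ₖ vecMulVec (β i) (star (β j))) := by
  ext ⟨a, b⟩ ⟨a', b'⟩
  simp only [schmidtVec, vecMulVec_apply, Pi.star_apply, star_sum, Finset.sum_mul,
    Finset.mul_sum, Matrix.sum_apply, Matrix.smul_apply, kroneckerMap_apply, smul_eq_mul,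
    star_mul', Complex.star_def, Complex.conj_ofReal, Complex.ofReal_mul]
  rw [Finset.sum_comm]
  refine Finset.sum_congr rfl fun i _ => Finset.sum_congr rfl fun j _ => ?_
  ring

variable [DecidableEq ι]

theorem partialTraceRight_vecMulVec_schmidtVec [Fintype n] (c : ι → ℝ) (α : ι → m → ℂ)
    {β : ι → n → ℂ} (hβ : ∀ i j, ∑ k, star (β i k) * β j k = if i = j then 1 else 0) :
    partialTraceRight (vecMulVec (schmidtVec c α β) (star (schmidtVec c α β)))
      = ∑ i, ((c i ^ 2 : ℝ) : ℂ) • vecMulVec (α i) (star (α i)) := by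
  ext a b
  have expand : ∑ k, schmidtVec c α β (a, k) * star (schmidtVec c α β (b, k))
      = ∑ j, ∑ i, (c i * c j : ℂ) * α i a * star (α j b) * ∑ k, star (β j k) * β i k := by
    simp only [schmidtVec, star_sum, Finset.sum_mul, Finset.mul_sum, star_mul',
      Complex.star_def, Complex.conj_ofReal]
    rw [← Finset.sum_comm_cycle]
    refine Finset.sum_congr rfl fun j _ => Finset.sum_congr rfl fun i _ =>
      Finset.sum_congr rfl fun k _ => ?_
    ring
  simp only [partialTraceRight, of_apply, vecMulVec_apply, Pi.star_apply, expand, hβ, mul_ite,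
    mul_one, mul_zero, Finset.sum_ite_eq, Finset.mem_univ, if_true, Matrix.sum_apply,
    Matrix.smul_apply, smul_eq_mul]
  push_cast
  refine Finset.sum_congr rfl fun i _ => ?_
  ring

theorem partialTraceLeft_vecMulVec_schmidtVec [Fintype m] (c : ι → ℝ) {α : ι → m → ℂ}
    (β : ι → n → ℂ) (hα : ∀ i j, ∑ k, star (α i k) * α j k = if i = j then 1 else 0) :
    partialTraceLeft (vecMulVec (schmidtVec c α β) (star (schmidtVec c α β)))
      = ∑ i, ((c i ^ 2 : ℝ) : ℂ) • vecMulVec (β i) (star (β i)) := by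
  rw [← partialTraceRight_vecMulVec_schmidtVec c β hα]
  ext a b
  simp only [partialTraceLeft, partialTraceRight, of_apply, vecMulVec_apply, Pi.star_apply,
    schmidtVec_swap c α β]

end Schmidt

theorem stmt_13 (p : ℝ) (hp : p ∈ Set.Icc (0 : ℝ) 1)
    (α β : Fin 2 → Fin 2 → ℂ)
    (hα : ∀ i j, ∑ k, star (α i k) * α j k = if i = j then 1 else 0)
    (hβ : ∀ i j, ∑ k, star (β i k) * β j k = if i = j then 1 else 0)
    (Ψ : Fin 2 × Fin 2 → ℂ)
    (hΨ : Ψ = fun q => (Real.sqrt p : ℂ) * α 0 q.1 * β 0 q.2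
        + (Real.sqrt (1 - p) : ℂ) * α 1 q.1 * β 1 q.2) :
    let ρ₁ : Matrix (Fin 2) (Fin 2) ℂ :=
      Matrix.of fun a b => ∑ k, Ψ (a, k) * star (Ψ (b, k))
    let ρ₂ : Matrix (Fin 2) (Fin 2) ℂ :=
      Matrix.of fun a b => ∑ k, Ψ (k, a) * star (Ψ (k, b))
    let A : Matrix (Fin 2 × Fin 2) (Fin 2 × Fin 2) ℂ :=
      vecMulVec Ψ (star Ψ) + ((1 : ℂ) / 2) • 1
        - ρ₁ ⊗ₖ (((1 : ℂ) / 2) • (1 : Matrix (Fin 2) (Fin 2) ℂ))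
        - (((1 : ℂ) / 2) • (1 : Matrix (Fin 2) (Fin 2) ℂ)) ⊗ₖ ρ₂
    let Ψ' : Fin 2 × Fin 2 → ℂ := fun q => (Real.sqrt (1 - p) : ℂ) * α 0 q.1 * β 0 q.2
        + (Real.sqrt p : ℂ) * α 1 q.1 * β 1 q.2
    A.PosSemidef ∧
      A = ((1 : ℂ) / 2) • vecMulVec Ψ (star Ψ)
          + ((1 : ℂ) / 2) • vecMulVec Ψ' (star Ψ') := by
  intro ρ₁ ρ₂ A Ψ'
  have hΨ'_schmidt : Ψ' = schmidtVec ![√(1 - p), √p] α β := by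
    funext q; simp [Ψ', schmidtVec, Fin.sum_univ_two]
  have hΨ_schmidt : Ψ = schmidtVec ![√p, √(1 - p)] α β := by
    rw [hΨ]; funext q; simp [schmidtVec, Fin.sum_univ_two]
  have hρ₁ : ρ₁ = _ := hΨ_schmidt ▸ partialTraceRight_vecMulVec_schmidtVec _ α hβ
  have hρ₂ : ρ₂ = _ := hΨ_schmidt ▸ partialTraceLeft_vecMulVec_schmidtVec _ β hα
  have hA_basis : A = vecMulVec Ψ (star Ψ)
      + ((1 : ℂ) / 2)
          • ((∑ i, vecMulVec (α i) (star (α i))) ⊗ₖ ∑ i, vecMulVec (β i) (star (β i)))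
      - ρ₁ ⊗ₖ (((1 : ℂ) / 2) • ∑ i, vecMulVec (β i) (star (β i)))
      - (((1 : ℂ) / 2) • ∑ i, vecMulVec (α i) (star (α i))) ⊗ₖ ρ₂ := by
    rw [sum_vecMulVec_self_star_eq_one hα, sum_vecMulVec_self_star_eq_one hβ, one_kronecker_one]
  have hA : A = ((1 : ℂ) / 2) • vecMulVec Ψ (star Ψ)
      + ((1 : ℂ) / 2) • vecMulVec Ψ' (star Ψ') := by
    rw [hA_basis, hρ₁, hρ₂, hΨ_schmidt, hΨ'_schmidt, vecMulVec_schmidtVec, vecMulVec_schmidtVec]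
    simp only [Fin.sum_univ_two, Matrix.cons_val_zero, Matrix.cons_val_one, add_kronecker,
      kronecker_add, smul_kronecker, kronecker_smul, Real.sq_sqrt hp.1,
      Real.sq_sqrt (sub_nonneg.2 hp.2), Real.mul_self_sqrt hp.1,
      Real.mul_self_sqrt (sub_nonneg.2 hp.2)]
    push_cast
    module
  refine ⟨?_, hA⟩
  rw [hA]
  exact ((posSemidef_vecMulVec_self_star Ψ).smul (by positivity)).add
    ((posSemidef_vecMulVec_self_star Ψ').smul (by positivity))
end

section
/- For d > 2, the projection Π on the span of bistochastic maps fails to preserve positivity: there exists a classical channel C(ρ) = Σ_{x,y} p(y|x)|y⟩⟨y|⟨x|ρ|x⟩ on ℂᵈ such that ⟨1| Π(C)(|1⟩⟨1|) |1⟩ = −(d−2)/(2d) < 0, where Π(C)(ρ) = C(ρ) + Tr[ρ]·I/d − C(I)·Tr[ρ]/d (using that C is trace-preserving). -/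
/-!
The `(1,1)` entry of `Π(C)(|1⟩⟨1|)` is `p(1|1) + (1 - ∑ₓ p(1|x)) / d`. The channel is far from
unital: every `x ≠ 1` is sent to `1`, so `∑ₓ p(1|x) = p(1|1) + (d - 1)`, and the entry becomes
`p(1|1) (d - 1) / d - (d - 2) / d = -(d - 2) / (2d)`.
-/

open Matrix

variable {n R : Type*} [Fintype n] [DecidableEq n]

-- `p y x` is the conditional probability `p(y|x)`.
def classicalChannel [NonUnitalNonAssocSemiring R] (p : n → n → R) (ρ : Matrix n n R) :
    Matrix n n R :=
  diagonal fun y => ∑ x, p y x * ρ x x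

theorem classicalChannel_single_apply_self [NonAssocSemiring R] (p : n → n → R) (x y : n) :
    classicalChannel p (single x x 1) y y = p y x := by
  simp [classicalChannel, single_apply]

theorem classicalChannel_one_apply_self [NonAssocSemiring R] (p : n → n → R) (y : n) :
    classicalChannel p 1 y y = ∑ x, p y x := by
  simp [classicalChannel, one_apply]

theorem classicalChannel_projection_single_apply_self [CommRing R] (p : n → n → R) (z : n)
    (c : R) :
    (classicalChannel p (single z z 1) + c • 1 - c • classicalChannel p 1) z z =
      p z z + c * (1 - ∑ x, p z x) := by
  rw [Matrix.sub_apply, Matrix.add_apply, Matrix.smul_apply, Matrix.smul_apply, one_apply_eq,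
    classicalChannel_single_apply_self, classicalChannel_one_apply_self, smul_eq_mul, smul_eq_mul]
  ring

theorem sum_ite_eq_add_card_sub_one_mul [NonAssocSemiring R] (z : n) (a b : R) :
    ∑ x, (if x = z then a else b) = a + (Fintype.card n - 1 : ℕ) * b := by
  rw [Fintype.sum_eq_add_sum_compl z, if_pos rfl,
    Finset.sum_congr rfl fun x hx => if_neg (by simpa using hx)]
  simp [Finset.card_compl]

theorem stmt_14 (d : ℕ) (hd : 2 < d) :
    let z : Fin d := ⟨0, by omega⟩
    -- conditional probabilities p(y|x)
    let pc : Fin d → Fin d → ℂ := fun y x =>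
      if x = z then
        (if y = z then ((d : ℂ) - 2) / (2 * ((d : ℂ) - 1))
         else (1 / ((d : ℂ) - 1)) * (1 - ((d : ℂ) - 2) / (2 * ((d : ℂ) - 1))))
      else (if y = z then 1 else 0)
    -- the classical channel C(ρ) = Σ_{x,y} p(y|x) |y⟩⟨y| ⟨x|ρ|x⟩
    let C : Matrix (Fin d) (Fin d) ℂ → Matrix (Fin d) (Fin d) ℂ := fun ρ =>
      Matrix.of fun y y' => if y = y' then ∑ x, pc y x * ρ x x else 0
    (C (Matrix.single z z 1) + ((1 : ℂ) / (d : ℂ)) • 1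
        - ((1 : ℂ) / (d : ℂ)) • C 1) z z
      = -((d : ℂ) - 2) / (2 * (d : ℂ)) ∧
    -((d : ℝ) - 2) / (2 * (d : ℝ)) < 0 := by
  intro z pc C
  have hrow : ∑ x, pc z x = pc z z + ((d - 1 : ℕ) : ℂ) := by
    simpa [pc] using sum_ite_eq_add_card_sub_one_mul z (pc z z) (1 : ℂ)
  have hd0 : (d : ℂ) ≠ 0 := by exact_mod_cast (by omega : d ≠ 0)
  have hd1 : (d : ℂ) - 1 ≠ 0 := sub_ne_zero.mpr (by exact_mod_cast (by omega : d ≠ 1))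
  refine ⟨?_, ?_⟩
  · change (classicalChannel pc (single z z 1) + ((1 : ℂ) / d) • 1
        - ((1 : ℂ) / d) • classicalChannel pc 1) z z = _
    rw [classicalChannel_projection_single_apply_self, hrow, Nat.cast_sub (by omega), Nat.cast_one]
    simp only [pc, if_pos]
    field_simp
    ring
  · have : (2 : ℝ) < d := by exact_mod_cast hd
    exact div_neg_of_neg_of_pos (by linarith) (by linarith)
end

section
/- Let U, V be d×d unitaries and define S_U = U⊗|0⟩⟨0| + Uᵀ⊗|1⟩⟨1| and S_V = Vᵀ⊗|0⟩⟨0| + V⊗|1⟩⟨1| acting on ℂᵈ⊗ℂ². Then for any |ψ⟩ ∈ ℂᵈ, S_U S_V (|ψ⟩⊗|+⟩) = ((UVᵀ + UᵀV)/2 |ψ⟩)⊗|+⟩ + ((UVᵀ − UᵀV)/2 |ψ⟩)⊗|−⟩, where |±⟩ = (|0⟩±|1⟩)/√2. Consequently, if UVᵀ = UᵀV the output lies in ℂᵈ⊗span{|+⟩}, and if UVᵀ = −UᵀV it lies in ℂᵈ⊗span{|−⟩}. -/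
/-!
Both `S_U` and `S_V` act blockwise according to the qubit (`U`, `Vᵀ` on `|0⟩`, `Uᵀ`, `V` on `|1⟩`),
so `S_U S_V` applies `UVᵀ` on `|0⟩` and `UᵀV` on `|1⟩`. Any such operator `A ⊗ |0⟩⟨0| + B ⊗ |1⟩⟨1|`
equals `½(A + B) ⊗ 1 + ½(A - B) ⊗ Z`, and `Z|+⟩ = |−⟩`.
-/

open Matrix Kronecker

section Kronecker

variable {R m n p q : Type*} [CommSemiring R] [Fintype n] [Fintype q]

theorem Matrix.kronecker_mulVec_tmul (A : Matrix m n R) (B : Matrix p q R) (x : n → R)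
    (y : q → R) :
    (A ⊗ₖ B) *ᵥ (fun j => x j.1 * y j.2) = fun i => (A *ᵥ x) i.1 * (B *ᵥ y) i.2 := by
  funext i
  simp only [mulVec, dotProduct, kroneckerMap_apply, Fintype.sum_prod_type, Finset.sum_mul_sum]
  exact Finset.sum_congr rfl fun j _ => Finset.sum_congr rfl fun k _ => by ring

end Kronecker

section QubitControlled

variable {R n : Type*}

def pauliZ [Ring R] : Matrix (Fin 2) (Fin 2) R := diagonal ![1, -1]

theorem pauliZ_mulVec_const [Ring R] (c : R) :
    pauliZ *ᵥ (fun _ => c) = fun b => if b = 0 then c else -c := by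
  funext b
  fin_cases b <;> simp [pauliZ, mulVec_diagonal]

def qubitControlled [Semiring R] (A B : Matrix n n R) : Matrix (n × Fin 2) (n × Fin 2) R :=
  A ⊗ₖ single 0 0 1 + B ⊗ₖ single 1 1 1

theorem qubitControlled_mul_qubitControlled [CommSemiring R] [Fintype n] (A B C D : Matrix n n R) :
    qubitControlled A B * qubitControlled C D = qubitControlled (A * C) (B * D) := by
  have h01 : (single 0 0 1 : Matrix (Fin 2) (Fin 2) R) * single 1 1 1 = 0 :=
    single_mul_single_of_ne _ _ _ _ Fin.zero_ne_one _
  have h10 : (single 1 1 1 : Matrix (Fin 2) (Fin 2) R) * single 0 0 1 = 0 :=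
    single_mul_single_of_ne _ _ _ _ Fin.zero_ne_one.symm _
  simp only [qubitControlled, Matrix.add_mul, Matrix.mul_add, ← mul_kronecker_mul,
    single_mul_single_same, h01, h10, kronecker_zero, mul_one, add_zero, zero_add]

theorem qubitControlled_self [Semiring R] (A : Matrix n n R) :
    qubitControlled A A = A ⊗ₖ 1 := by
  ext ⟨i, b⟩ ⟨j, c⟩
  fin_cases b <;> fin_cases c <;> simp [qubitControlled, single]

theorem qubitControlled_neg [Ring R] (A : Matrix n n R) :
    qubitControlled A (-A) = A ⊗ₖ pauliZ := by
  ext ⟨i, b⟩ ⟨j, c⟩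
  fin_cases b <;> fin_cases c <;> simp [qubitControlled, single, pauliZ]

theorem qubitControlled_eq_kronecker_one_add_kronecker_pauliZ [Field R] [NeZero (2 : R)]
    (A B : Matrix n n R) :
    qubitControlled A B
      = ((1 / 2 : R) • (A + B)) ⊗ₖ 1 + ((1 / 2 : R) • (A - B)) ⊗ₖ pauliZ := by
  ext ⟨i, b⟩ ⟨j, c⟩
  fin_cases b <;> fin_cases c <;> simp [qubitControlled, single, pauliZ] <;> field_simp <;> ring

end QubitControlled

theorem stmt_16_general (d : ℕ) (U V : Matrix (Fin d) (Fin d) ℂ)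
    (ψ : Fin d → ℂ) :
    let P0 : Matrix (Fin 2) (Fin 2) ℂ := Matrix.single 0 0 1
    let P1 : Matrix (Fin 2) (Fin 2) ℂ := Matrix.single 1 1 1
    let SU := U ⊗ₖ P0 + Uᵀ ⊗ₖ P1
    let SV := Vᵀ ⊗ₖ P0 + V ⊗ₖ P1
    let plus : Fin 2 → ℂ := fun _ => 1 / (Real.sqrt 2 : ℂ)
    let minus : Fin 2 → ℂ := fun b =>
      if b = 0 then 1 / (Real.sqrt 2 : ℂ) else -(1 / (Real.sqrt 2 : ℂ))
    (SU * SV).mulVec (fun q => ψ q.1 * plus q.2)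
      = (fun q => (((1 : ℂ) / 2) • (U * Vᵀ + Uᵀ * V)).mulVec ψ q.1 * plus q.2
          + (((1 : ℂ) / 2) • (U * Vᵀ - Uᵀ * V)).mulVec ψ q.1 * minus q.2) ∧
    (U * Vᵀ = Uᵀ * V →
      (SU * SV).mulVec (fun q => ψ q.1 * plus q.2)
        = fun q => (U * Vᵀ).mulVec ψ q.1 * plus q.2) ∧
    (U * Vᵀ = -(Uᵀ * V) →
      (SU * SV).mulVec (fun q => ψ q.1 * plus q.2)
        = fun q => (U * Vᵀ).mulVec ψ q.1 * minus q.2) := by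
  intro P0 P1 SU SV plus minus
  have hS : SU * SV = qubitControlled (U * Vᵀ) (Uᵀ * V) :=
    qubitControlled_mul_qubitControlled U Uᵀ Vᵀ V
  have hZ : pauliZ *ᵥ plus = minus := pauliZ_mulVec_const _
  refine ⟨?_, fun h => ?_, fun h => ?_⟩
  · rw [hS, qubitControlled_eq_kronecker_one_add_kronecker_pauliZ, add_mulVec, kronecker_mulVec_tmul, kronecker_mulVec_tmul,
      one_mulVec, hZ]
    rfl
  · rw [hS, ← h, qubitControlled_self, kronecker_mulVec_tmul, one_mulVec]
  · rw [hS, show Uᵀ * V = -(U * Vᵀ) by rw [h, neg_neg], qubitControlled_neg,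
      kronecker_mulVec_tmul, hZ]

theorem stmt_16 (d : ℕ) (U V : Matrix (Fin d) (Fin d) ℂ)
    (hU : U ∈ unitaryGroup (Fin d) ℂ) (hV : V ∈ unitaryGroup (Fin d) ℂ)
    (ψ : Fin d → ℂ) :
    let P0 : Matrix (Fin 2) (Fin 2) ℂ := Matrix.single 0 0 1
    let P1 : Matrix (Fin 2) (Fin 2) ℂ := Matrix.single 1 1 1
    let SU := U ⊗ₖ P0 + Uᵀ ⊗ₖ P1
    let SV := Vᵀ ⊗ₖ P0 + V ⊗ₖ P1
    let plus : Fin 2 → ℂ := fun _ => 1 / (Real.sqrt 2 : ℂ)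
    let minus : Fin 2 → ℂ := fun b =>
      if b = 0 then 1 / (Real.sqrt 2 : ℂ) else -(1 / (Real.sqrt 2 : ℂ))
    (SU * SV).mulVec (fun q => ψ q.1 * plus q.2)
      = (fun q => (((1 : ℂ) / 2) • (U * Vᵀ + Uᵀ * V)).mulVec ψ q.1 * plus q.2
          + (((1 : ℂ) / 2) • (U * Vᵀ - Uᵀ * V)).mulVec ψ q.1 * minus q.2) ∧
    (U * Vᵀ = Uᵀ * V →
      (SU * SV).mulVec (fun q => ψ q.1 * plus q.2)
        = fun q => (U * Vᵀ).mulVec ψ q.1 * plus q.2) ∧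
    (U * Vᵀ = -(Uᵀ * V) →
      (SU * SV).mulVec (fun q => ψ q.1 * plus q.2)
        = fun q => (U * Vᵀ).mulVec ψ q.1 * minus q.2) :=
  stmt_16_general d U V ψ
end

section
/- The operator F_C with Kraus operators Fᵢ = Cᵢ⊗|0⟩⟨0| + Cᵢᵀ⊗|1⟩⟨1| depends only on the channel C and not on the chosen Kraus representation: with V := I⊗I⊗|0⟩⟨0|⊗|0⟩⟨0| + SWAP⊗|1⟩⟨1|⊗|1⟩⟨1| suitably arranged, one has |Fᵢ⟩⟩ = V|Cᵢ⟩⟩ ⊗ appropriate control kets, hence Choi(F_C) = V·(Choi(C)⊗control)·V† is a function of Choi(C) alone. Concretely: for Kraus families {Cᵢ} and {Dⱼ} with Σᵢ|Cᵢ⟩⟩⟨⟨Cᵢ| = Σⱼ|Dⱼ⟩⟩⟨⟨Dⱼ|, it holds that Σᵢ Fᵢ ρ Fᵢ† = Σⱼ F'ⱼ ρ F'ⱼ† for all ρ, where Fᵢ = Cᵢ⊗|0⟩⟨0| + Cᵢᵀ⊗|1⟩⟨1| and F'ⱼ = Dⱼ⊗|0⟩⟨0| + Dⱼᵀ⊗|1⟩⟨1|.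 -/
/-!
Vectorisation turns every linear map `L` between matrix spaces into a matrix `M` with
`|L E⟩⟩ = M |E⟩⟩`, so `L` acts on Choi operators by `Choi ↦ M Choi Mᴴ`; in particular
Kraus families with equal Choi operators stay so after applying `L` entrywise. The time flip
`E ↦ E ⊗ |0⟩⟨0| + Eᵀ ⊗ |1⟩⟨1|` is linear, and the channel `ρ ↦ ∑ᵢ Kᵢ ρ Kᵢᴴ` only depends on the
Choi operator of its Kraus family `K`.
-/

open Matrix Kronecker

theorem exists_mulVec_uncurry_eq {R m n m' n' : Type*} [CommSemiring R] [Fintype m] [Fintype n]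
    (L : Matrix m n R →ₗ[R] Matrix m' n' R) :
    ∃ M : Matrix (m' × n') (m × n) R, ∀ E, Function.uncurry (L E) = M *ᵥ Function.uncurry E := by
  classical
  exact ⟨LinearMap.toMatrix' ((LinearEquiv.curry R R m' n').symm.toLinearMap ∘ₗ L ∘ₗ
      (LinearEquiv.curry R R m n).toLinearMap), fun E => by rw [LinearMap.toMatrix'_mulVec]; rfl⟩

section KrausChoi

variable {R ι m n : Type*} [CommSemiring R] [StarRing R] [Fintype ι]

/-- `∑ᵢ |Kᵢ⟩⟩⟨⟨Kᵢ|`, with `|A⟩⟩ = Function.uncurry A` the row-major vectorisation. -/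
def krausChoi (K : ι → Matrix m n R) : Matrix (m × n) (m × n) R :=
  ∑ i, vecMulVec (Function.uncurry (K i)) (star (Function.uncurry (K i)))

theorem sum_mul_mul_conjTranspose_apply [Fintype n] (K : ι → Matrix m n R)
    (ρ : Matrix n n R) (a b : m) :
    (∑ i, K i * ρ * (K i)ᴴ) a b = ∑ u, ∑ v, krausChoi K (a, u) (b, v) * ρ u v := by
  simp only [krausChoi, Matrix.sum_apply, mul_apply, vecMulVec_apply, conjTranspose_apply,
    Pi.star_apply, Finset.sum_mul]
  rw [Finset.sum_congr rfl fun _ _ => Finset.sum_comm, Finset.sum_comm]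
  refine Finset.sum_congr rfl fun u _ => ?_
  rw [Finset.sum_comm]
  exact Finset.sum_congr rfl fun v _ => Finset.sum_congr rfl fun i _ => mul_right_comm _ _ _

theorem sum_mul_mul_conjTranspose_eq_of_krausChoi_eq {κ : Type*} [Fintype κ] [Fintype n]
    {K : ι → Matrix m n R} {K' : κ → Matrix m n R} (h : krausChoi K = krausChoi K')
    (ρ : Matrix n n R) : ∑ i, K i * ρ * (K i)ᴴ = ∑ j, K' j * ρ * (K' j)ᴴ := by
  ext a b
  simp only [sum_mul_mul_conjTranspose_apply, h]

theorem sum_vecMulVec_mulVec_star {α β : Type*} [Fintype β] (M : Matrix α β R)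
    (v : ι → β → R) :
    ∑ i, vecMulVec (M *ᵥ v i) (star (M *ᵥ v i))
      = M * (∑ i, vecMulVec (v i) (star (v i))) * Mᴴ := by
  simp only [Matrix.mul_sum, Matrix.sum_mul, mul_vecMulVec, vecMulVec_mul, star_mulVec]

theorem krausChoi_comp_eq_of_krausChoi_eq {κ m' n' : Type*} [Fintype κ] [Fintype m] [Fintype n]
    (L : Matrix m n R →ₗ[R] Matrix m' n' R) {K : ι → Matrix m n R} {K' : κ → Matrix m n R}
    (h : krausChoi K = krausChoi K') : krausChoi (L ∘ K) = krausChoi (L ∘ K') := by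
  obtain ⟨M, hM⟩ := exists_mulVec_uncurry_eq L
  simp only [krausChoi, Function.comp_apply, hM, sum_vecMulVec_mulVec_star]
  exact congrArg (fun X => M * X * Mᴴ) h

end KrausChoi

def timeFlip (R n : Type*) [CommSemiring R] :
    Matrix n n R →ₗ[R] Matrix (n × Fin 2) (n × Fin 2) R where
  toFun E := E ⊗ₖ single 0 0 1 + Eᵀ ⊗ₖ single 1 1 1
  map_add' E F := by
    simp only [transpose_add, add_kronecker]
    abel
  map_smul' c E := by
    simp only [transpose_smul, smul_kronecker, RingHom.id_apply, smul_add]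

/-- The time-flipped channel depends only on the Choi operator of the input channel,
not on the chosen Kraus representation. -/
theorem stmt_17 (d : ℕ) (ι κ : Type) [Fintype ι] [Fintype κ]
    (C : ι → Matrix (Fin d) (Fin d) ℂ) (D : κ → Matrix (Fin d) (Fin d) ℂ)
    (hChoi : ∑ i, vecMulVec (fun p : Fin d × Fin d => C i p.1 p.2)
                (star fun p : Fin d × Fin d => C i p.1 p.2)
        = ∑ j, vecMulVec (fun p : Fin d × Fin d => D j p.1 p.2)
                (star fun p : Fin d × Fin d => D j p.1 p.2)) :
    let P0 : Matrix (Fin 2) (Fin 2) ℂ := single 0 0 1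
    let P1 : Matrix (Fin 2) (Fin 2) ℂ := single 1 1 1
    ∀ ρ : Matrix (Fin d × Fin 2) (Fin d × Fin 2) ℂ,
      ∑ i, (C i ⊗ₖ P0 + (C i)ᵀ ⊗ₖ P1) * ρ * (C i ⊗ₖ P0 + (C i)ᵀ ⊗ₖ P1)ᴴ
        = ∑ j, (D j ⊗ₖ P0 + (D j)ᵀ ⊗ₖ P1) * ρ * (D j ⊗ₖ P0 + (D j)ᵀ ⊗ₖ P1)ᴴ :=
  sum_mul_mul_conjTranspose_eq_of_krausChoi_eq
    (krausChoi_comp_eq_of_krausChoi_eq (timeFlip ℂ (Fin d)) (K := C) (K' := D) hChoi)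
end
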